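/- arXiv:2103.12374 — 5 statements merged into one kernel-verified Lean document; each statement's English description precedes it below -/
import Mathlib

section
/- If ∑_{1≤t<s≤T} ∑_{i=1}^N (x̃_{is} − x̃_{it})² > 0, then the β-component of any minimizer of the TWFE least-squares objective equals [∑_{1≤t<s≤T} ∑_{i=1}^N (ỹ_{is} − ỹ_{it})(x̃_{is} − x̃_{it})] / [∑_{1≤t<s≤T} ∑_{i=1}^N (x̃_{is} − x̃_{it})²]. -/
open Finset

/-- If a quadratic `ε ↦ ε * L + ε² * S` is nonnegative for all `ε`, its linear
coefficient vanishes. -/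
lemma twfe_foc_aux {L S : ℝ} (h : ∀ ε : ℝ, 0 ≤ ε * L + ε^2 * S) : L = 0 := by
  by_contra hL
  have hpos : (0:ℝ) < |S| + 1 := by positivity
  have h1 := h (-L / (|S| + 1))
  have hS : S ≤ |S| := le_abs_self S
  have hL2 : 0 < L^2 := by positivity
  have he : -L / (|S|+1) * L + (-L / (|S|+1))^2 * S
      = (L^2 * (S - (|S|+1))) / (|S|+1)^2 := by field_simp; ring
  rw [he] at h1
  have h2 : L^2 * (S - (|S|+1)) < 0 := by nlinarith
  have h3 := (le_div_iff₀ (show (0:ℝ) < (|S|+1)^2 by positivity)).mp h1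
  simp at h3
  linarith

/-- Twice a strictly-triangular double sum of a symmetric, zero-diagonal function
equals the full double sum. -/
lemma twfe_tri (f : ℕ → ℕ → ℝ) (hsym : ∀ s t, f s t = f t s) (hd : ∀ s, f s s = 0) (T : ℕ) :
    2 * ∑ s ∈ range T, ∑ t ∈ range s, f s t = ∑ s ∈ range T, ∑ t ∈ range T, f s t := by
  induction T with
  | zero => simp
  | succ T ih =>
    rw [Finset.sum_range_succ, Finset.sum_range_succ (f := fun s => ∑ t ∈ range (T+1), f s t)]
    have h1 : ∀ s ∈ range T, ∑ t ∈ range (T+1), f s t = ∑ t ∈ range T, f s t + f s T := by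
      intro s _; rw [Finset.sum_range_succ]
    rw [Finset.sum_congr rfl h1, Finset.sum_add_distrib, Finset.sum_range_succ, hd]
    have h2 : ∑ t ∈ range T, f T t = ∑ s ∈ range T, f s T := by
      exact Finset.sum_congr rfl fun s _ => hsym T s
    linarith [ih]

lemma twfe_pair_inner (T : ℕ) (u w : ℕ → ℝ) :
    ∑ s ∈ range T, ∑ t ∈ range T, (u s - u t) * (w s - w t)
      = 2 * T * (∑ t ∈ range T, u t * w t) - 2 * (∑ t ∈ range T, u t) * (∑ t ∈ range T, w t) := by
  have h1 : ∀ s ∈ range T, ∑ t ∈ range T, (u s - u t) * (w s - w t)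
      = T * (u s * w s) - u s * (∑ t ∈ range T, w t) - (∑ t ∈ range T, u t) * w s
        + ∑ t ∈ range T, u t * w t := by
    intro s _
    have : ∀ t ∈ range T, (u s - u t) * (w s - w t)
        = u s * w s - u s * w t - u t * w s + u t * w t := by intro t _; ring
    rw [Finset.sum_congr rfl this]
    simp [Finset.sum_add_distrib, Finset.sum_sub_distrib, ← Finset.mul_sum, ← Finset.sum_mul,
      Finset.sum_const, card_range]
  rw [Finset.sum_congr rfl h1]
  simp only [Finset.sum_add_distrib, Finset.sum_sub_distrib, ← Finset.mul_sum, ← Finset.sum_mul,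
    Finset.sum_const, card_range, nsmul_eq_mul]
  ring

/-- The pairwise-difference sum equals `T`-times the cross-moment minus the product of
time-sums. -/
lemma twfe_pair_sum (N T : ℕ) (v w : ℕ → ℕ → ℝ) :
    ∑ s ∈ range T, ∑ t ∈ range s, ∑ i ∈ range N, (v i s - v i t) * (w i s - w i t)
      = T * (∑ i ∈ range N, ∑ t ∈ range T, v i t * w i t)
        - ∑ i ∈ range N, (∑ t ∈ range T, v i t) * (∑ t ∈ range T, w i t) := by
  have hsym : ∀ s t, (∑ i ∈ range N, (v i s - v i t) * (w i s - w i t))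
      = ∑ i ∈ range N, (v i t - v i s) * (w i t - w i s) := by
    intro s t; exact Finset.sum_congr rfl fun i _ => by ring
  have hd : ∀ s, (∑ i ∈ range N, (v i s - v i s) * (w i s - w i s)) = 0 := by simp
  have htri := twfe_tri (fun s t => ∑ i ∈ range N, (v i s - v i t) * (w i s - w i t)) hsym hd T
  have hswap : ∑ s ∈ range T, ∑ t ∈ range T, ∑ i ∈ range N, (v i s - v i t) * (w i s - w i t)
      = ∑ i ∈ range N, ∑ s ∈ range T, ∑ t ∈ range T, (v i s - v i t) * (w i s - w i t) := by
    rw [Finset.sum_congr rfl fun s (_ : s ∈ range T) =>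
      (Finset.sum_comm :
        ∑ t ∈ range T, ∑ i ∈ range N, (v i s - v i t) * (w i s - w i t)
          = ∑ i ∈ range N, ∑ t ∈ range T, (v i s - v i t) * (w i s - w i t))]
    exact Finset.sum_comm
  have hinner : ∀ i ∈ range N,
      ∑ s ∈ range T, ∑ t ∈ range T, (v i s - v i t) * (w i s - w i t)
        = 2 * ((T : ℝ) * (∑ t ∈ range T, v i t * w i t)
          - (∑ t ∈ range T, v i t) * (∑ t ∈ range T, w i t)) := by
    intro i _; rw [twfe_pair_inner T (v i) (w i)]; ring
  rw [hswap, Finset.sum_congr rfl hinner, ← Finset.mul_sum] at htri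
  have h2 := mul_left_cancel₀ (two_ne_zero (α := ℝ)) htri
  rw [h2]
  simp only [Finset.sum_sub_distrib, ← Finset.mul_sum]

/-- The algebraic heart of the TWFE formula: given the first-order conditions, the
within-style numerator equals `β` times the within-style denominator. -/
lemma twfe_main_algebra (N T : ℕ) (hN : 1 ≤ N)
    (y x ty tx : ℕ → ℕ → ℝ) (α : ℕ → ℝ) (β : ℝ) (γ : ℕ → ℝ) (r : ℕ → ℕ → ℝ)
    (hr : ∀ i t, r i t = y i t - α i - β * x i t - γ t)
    (hty : ∀ i t, ty i t = y i t - (1 / (N : ℝ)) * ∑ j ∈ range N, y j t)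
    (htx : ∀ i t, tx i t = x i t - (1 / (N : ℝ)) * ∑ j ∈ range N, x j t)
    (hA : ∀ i ∈ range N, ∑ t ∈ range T, r i t = 0)
    (hG : ∀ t ∈ range T, ∑ i ∈ range N, r i t = 0)
    (hB : ∑ i ∈ range N, ∑ t ∈ range T, r i t * x i t = 0) :
    (T : ℝ) * (∑ i ∈ range N, ∑ t ∈ range T, ty i t * tx i t)
      - ∑ i ∈ range N, (∑ t ∈ range T, ty i t) * (∑ t ∈ range T, tx i t)
    = β * ((T : ℝ) * (∑ i ∈ range N, ∑ t ∈ range T, tx i t * tx i t)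
      - ∑ i ∈ range N, (∑ t ∈ range T, tx i t) * (∑ t ∈ range T, tx i t)) := by
  have hN0 : (N : ℝ) ≠ 0 := Nat.cast_ne_zero.mpr (by omega)
  set A : ℕ → ℝ := fun i => α i - (1 / (N : ℝ)) * ∑ j ∈ range N, α j with hA'
  have hty' : ∀ i, ∀ t ∈ range T, ty i t = r i t + A i + β * tx i t := by
    intro i t ht
    have hsum : ∑ j ∈ range N, y j t
        = (∑ j ∈ range N, α j) + β * (∑ j ∈ range N, x j t) + N * γ t := by
      have : ∀ j ∈ range N, y j t = r j t + α j + β * x j t + γ t := by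
        intro j _; rw [hr]; ring
      rw [Finset.sum_congr rfl this]
      simp only [Finset.sum_add_distrib, ← Finset.mul_sum, Finset.sum_const, card_range,
        nsmul_eq_mul, hG t ht]
      ring
    rw [hty i t, htx i t, hsum, hr, hA']
    field_simp
    ring
  have key : ∑ i ∈ range N, ∑ t ∈ range T, r i t * tx i t = 0 := by
    have h1 : ∀ i ∈ range N, ∑ t ∈ range T, r i t * tx i t
        = ∑ t ∈ range T, r i t * x i t
          - ∑ t ∈ range T, ((1 / (N : ℝ)) * ∑ j ∈ range N, x j t) * r i t := by
      intro i _
      rw [← Finset.sum_sub_distrib]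
      refine Finset.sum_congr rfl fun t _ => ?_
      rw [htx i t]; ring
    rw [Finset.sum_congr rfl h1, Finset.sum_sub_distrib, hB]
    have h2 : ∑ i ∈ range N, ∑ t ∈ range T, ((1 / (N : ℝ)) * ∑ j ∈ range N, x j t) * r i t
        = ∑ t ∈ range T, ((1 / (N : ℝ)) * ∑ j ∈ range N, x j t) * (∑ i ∈ range N, r i t) := by
      rw [Finset.sum_comm]
      exact Finset.sum_congr rfl fun t _ => by rw [← Finset.mul_sum]
    rw [h2]
    have h3 : ∀ t ∈ range T,
        ((1 / (N : ℝ)) * ∑ j ∈ range N, x j t) * (∑ i ∈ range N, r i t) = 0 := by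
      intro t ht; rw [hG t ht, mul_zero]
    rw [Finset.sum_congr rfl h3]
    simp
  have e1 : ∀ i ∈ range N, ∑ t ∈ range T, ty i t * tx i t
      = ∑ t ∈ range T, r i t * tx i t + A i * (∑ t ∈ range T, tx i t)
        + β * ∑ t ∈ range T, tx i t * tx i t := by
    intro i hi
    have : ∀ t ∈ range T, ty i t * tx i t
        = r i t * tx i t + A i * tx i t + β * (tx i t * tx i t) := by
      intro t ht; rw [hty' i t ht]; ring
    rw [Finset.sum_congr rfl this]
    simp only [Finset.sum_add_distrib, ← Finset.mul_sum]
  have e2 : ∀ i ∈ range N, ∑ t ∈ range T, ty i t = (T : ℝ) * A i + β * ∑ t ∈ range T, tx i t := by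
    intro i hi
    have : ∀ t ∈ range T, ty i t = r i t + A i + β * tx i t := fun t ht => hty' i t ht
    rw [Finset.sum_congr rfl this]
    simp only [Finset.sum_add_distrib, ← Finset.mul_sum, Finset.sum_const, card_range,
      nsmul_eq_mul, hA i hi]
    ring
  rw [Finset.sum_congr rfl e1,
    Finset.sum_congr rfl (fun i hi => by rw [e2 i hi] :
      ∀ i ∈ range N, (∑ t ∈ range T, ty i t) * (∑ t ∈ range T, tx i t)
        = ((T : ℝ) * A i + β * ∑ t ∈ range T, tx i t) * (∑ t ∈ range T, tx i t))]
  have e3 : ∀ i ∈ range N, ((T : ℝ) * A i + β * ∑ t ∈ range T, tx i t) * (∑ t ∈ range T, tx i t)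
      = (T : ℝ) * (A i * ∑ t ∈ range T, tx i t)
        + β * ((∑ t ∈ range T, tx i t) * (∑ t ∈ range T, tx i t)) := by
    intro i _; ring
  rw [Finset.sum_congr rfl e3]
  simp only [Finset.sum_add_distrib, ← Finset.mul_sum]
  rw [key]
  ring

/-- The β-component of any minimizer of the TWFE least-squares objective (with the
normalization `γ_T = 0`) equals the pairwise-difference ratio
`[∑_{s>t} ∑_i (ỹ_is − ỹ_it)(x̃_is − x̃_it)] / [∑_{s>t} ∑_i (x̃_is − x̃_it)²]`,
provided the denominator is positive. Periods are indexed `0, …, T−1`. -/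
theorem twfe_eq_pairwise_ratio (N T : ℕ) (hN : 1 ≤ N) (hT : 2 ≤ T)
    (y x ty tx : ℕ → ℕ → ℝ)
    (hty : ∀ i t, ty i t = y i t - (1 / (N : ℝ)) * ∑ j ∈ range N, y j t)
    (htx : ∀ i t, tx i t = x i t - (1 / (N : ℝ)) * ∑ j ∈ range N, x j t)
    (hpos : 0 < ∑ s ∈ range T, ∑ t ∈ range s, ∑ i ∈ range N, (tx i s - tx i t) ^ 2)
    (α : ℕ → ℝ) (β : ℝ) (γ : ℕ → ℝ) (hγ : γ (T - 1) = 0)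
    (hmin : ∀ (α' : ℕ → ℝ) (β' : ℝ) (γ' : ℕ → ℝ), γ' (T - 1) = 0 →
      ∑ i ∈ range N, ∑ t ∈ range T, (y i t - α i - β * x i t - γ t) ^ 2 ≤
        ∑ i ∈ range N, ∑ t ∈ range T, (y i t - α' i - β' * x i t - γ' t) ^ 2) :
    β = (∑ s ∈ range T, ∑ t ∈ range s, ∑ i ∈ range N, (ty i s - ty i t) * (tx i s - tx i t)) /
        (∑ s ∈ range T, ∑ t ∈ range s, ∑ i ∈ range N, (tx i s - tx i t) ^ 2) := by
  set r : ℕ → ℕ → ℝ := fun i t => y i t - α i - β * x i t - γ t with hr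
  -- FOC for α_i
  have hA : ∀ i ∈ range N, ∑ t ∈ range T, r i t = 0 := by
    intro i hi
    have key : ∀ ε : ℝ, 0 ≤ ε * (-2 * ∑ t ∈ range T, r i t) + ε^2 * T := by
      intro ε
      have h := hmin (Function.update α i (α i + ε)) β γ hγ
      rw [← Finset.sum_erase_add (range N) _ hi, ← Finset.sum_erase_add (range N)
        (fun i' => ∑ t ∈ range T,
          (y i' t - Function.update α i (α i + ε) i' - β * x i' t - γ t) ^ 2) hi] at h
      have he : ∑ i' ∈ (range N).erase i, ∑ t ∈ range T,
            (y i' t - Function.update α i (α i + ε) i' - β * x i' t - γ t) ^ 2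
          = ∑ i' ∈ (range N).erase i, ∑ t ∈ range T, (y i' t - α i' - β * x i' t - γ t) ^ 2 := by
        refine Finset.sum_congr rfl fun j hj => ?_
        rw [Function.update_of_ne (Finset.ne_of_mem_erase hj)]
      rw [he, Function.update_self] at h
      have hexp : ∑ t ∈ range T, (y i t - (α i + ε) - β * x i t - γ t) ^ 2
          = ∑ t ∈ range T, (r i t)^2 + (ε * (-2 * ∑ t ∈ range T, r i t) + ε^2 * T) := by
        have : ∀ t ∈ range T, (y i t - (α i + ε) - β * x i t - γ t) ^ 2
            = (r i t)^2 + (-2 * r i t) * ε + ε^2 := by intro t _; simp only [hr]; ring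
        rw [Finset.sum_congr rfl this]
        simp [Finset.sum_add_distrib, ← Finset.sum_mul, Finset.sum_const, card_range,
          ← Finset.mul_sum]
        ring
      rw [hexp] at h
      linarith
    have := twfe_foc_aux key
    linarith [this]
  -- FOC for β
  have hB : ∑ i ∈ range N, ∑ t ∈ range T, r i t * x i t = 0 := by
    have key : ∀ ε : ℝ, 0 ≤ ε * (-2 * ∑ i ∈ range N, ∑ t ∈ range T, r i t * x i t)
        + ε^2 * (∑ i ∈ range N, ∑ t ∈ range T, (x i t)^2) := by
      intro ε
      have h := hmin α (β + ε) γ hγ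
      have hexp : ∑ i ∈ range N, ∑ t ∈ range T, (y i t - α i - (β + ε) * x i t - γ t) ^ 2
          = ∑ i ∈ range N, ∑ t ∈ range T, (r i t)^2
            + (ε * (-2 * ∑ i ∈ range N, ∑ t ∈ range T, r i t * x i t)
              + ε^2 * (∑ i ∈ range N, ∑ t ∈ range T, (x i t)^2)) := by
        have h1 : ∀ i ∈ range N, ∑ t ∈ range T, (y i t - α i - (β + ε) * x i t - γ t) ^ 2
            = ∑ t ∈ range T, (r i t)^2 + ((-2 * ∑ t ∈ range T, r i t * x i t) * ε
              + (∑ t ∈ range T, (x i t)^2) * ε^2) := by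
          intro i _
          have : ∀ t ∈ range T, (y i t - α i - (β + ε) * x i t - γ t) ^ 2
              = (r i t)^2 + ((-2 * (r i t * x i t)) * ε + ((x i t)^2) * ε^2) := by
            intro t _; simp only [hr]; ring
          rw [Finset.sum_congr rfl this]
          simp [Finset.sum_add_distrib, ← Finset.sum_mul, ← Finset.mul_sum]
        rw [Finset.sum_congr rfl h1]
        simp [Finset.sum_add_distrib, ← Finset.sum_mul, ← Finset.mul_sum]
        ring
      rw [hexp] at h
      linarith
    have := twfe_foc_aux key
    linarith [this]
  -- FOC for γ_t, t ≠ T-1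
  have hG0 : ∀ t0 ∈ range (T - 1), ∑ i ∈ range N, r i t0 = 0 := by
    intro t0 ht0
    have hne : t0 ≠ T - 1 := by
      have := Finset.mem_range.mp ht0; omega
    have key : ∀ ε : ℝ, 0 ≤ ε * (-2 * ∑ i ∈ range N, r i t0) + ε^2 * N := by
      intro ε
      have ht0T : t0 ∈ range T := by
        have := Finset.mem_range.mp ht0; exact Finset.mem_range.mpr (by omega)
      have hγ' : Function.update γ t0 (γ t0 + ε) (T - 1) = 0 := by
        rw [Function.update_of_ne (Ne.symm hne)]; exact hγ
      have h := hmin α β (Function.update γ t0 (γ t0 + ε)) hγ'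
      have hexp : ∀ i ∈ range N, ∑ t ∈ range T,
            (y i t - α i - β * x i t - Function.update γ t0 (γ t0 + ε) t) ^ 2
          = ∑ t ∈ range T, (r i t)^2 + ((-2 * r i t0) * ε + ε^2) := by
        intro i _
        rw [← Finset.sum_erase_add (range T) _ ht0T, ← Finset.sum_erase_add (range T)
          (fun t => (r i t)^2) ht0T]
        have he : ∑ t ∈ (range T).erase t0,
              (y i t - α i - β * x i t - Function.update γ t0 (γ t0 + ε) t) ^ 2
            = ∑ t ∈ (range T).erase t0, (r i t)^2 := by
          refine Finset.sum_congr rfl fun s hs => ?_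
          rw [Function.update_of_ne (Finset.ne_of_mem_erase hs)]
        rw [he, Function.update_self]
        have : (y i t0 - α i - β * x i t0 - (γ t0 + ε)) ^ 2
            = (r i t0)^2 + ((-2 * r i t0) * ε + ε^2) := by simp only [hr]; ring
        rw [this]; ring
      rw [Finset.sum_congr rfl hexp, Finset.sum_add_distrib] at h
      simp only [Finset.sum_add_distrib, ← Finset.sum_mul, Finset.sum_const, card_range,
        nsmul_eq_mul] at h
      rw [← Finset.mul_sum] at h
      have hL : ∑ i ∈ range N, ∑ t ∈ range T, (y i t - α i - β * x i t - γ t) ^ 2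
          = ∑ i ∈ range N, ∑ t ∈ range T, r i t ^ 2 := rfl
      rw [hL] at h
      linarith
    have := twfe_foc_aux key
    linarith [this]
  -- FOC for γ_t extends to t = T-1
  have hG : ∀ t ∈ range T, ∑ i ∈ range N, r i t = 0 := by
    intro t ht
    rcases eq_or_ne t (T - 1) with hteq | htne
    · have htot : ∑ t ∈ range T, ∑ i ∈ range N, r i t = 0 := by
        rw [Finset.sum_comm]
        exact Finset.sum_eq_zero hA
      have hTs : T - 1 + 1 = T := by omega
      have hsplit := Finset.sum_range_succ (fun t => ∑ i ∈ range N, r i t) (T - 1)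
      rw [hTs] at hsplit
      have hzero : ∑ t ∈ range (T - 1), ∑ i ∈ range N, r i t = 0 :=
        Finset.sum_eq_zero hG0
      rw [hsplit, hzero, zero_add] at htot
      rw [hteq]; exact htot
    · have : t ∈ range (T - 1) := by
        have := Finset.mem_range.mp ht
        exact Finset.mem_range.mpr (by omega)
      exact hG0 t this
  -- Put everything together
  have halg := twfe_main_algebra N T hN y x ty tx α β γ r (fun i t => rfl) hty htx hA hG hB
  have hsq : ∑ s ∈ range T, ∑ t ∈ range s, ∑ i ∈ range N, (tx i s - tx i t) ^ 2
      = ∑ s ∈ range T, ∑ t ∈ range s, ∑ i ∈ range N, (tx i s - tx i t) * (tx i s - tx i t) := by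
    refine Finset.sum_congr rfl fun s _ => Finset.sum_congr rfl fun t _ =>
      Finset.sum_congr rfl fun i _ => sq (tx i s - tx i t) ▸ rfl
  rw [eq_div_iff (ne_of_gt hpos), hsq, twfe_pair_sum N T tx tx, twfe_pair_sum N T ty tx]
  linarith [halg]
end

section
/- Suppose that for every k = 1,…,T−1 one has ∑_{t=1}^{T−k} ∑_{i=1}^N (Δ_k x̃_{it})² > 0, and let β̂_k^FD = [∑_{t=1}^{T−k} ∑_{i=1}^N Δ_k ỹ_{it} Δ_k x̃_{it}] / [∑_{t=1}^{T−k} ∑_{i=1}^N (Δ_k x̃_{it})²] and ω̂_k^FD = [∑_{t=1}^{T−k} ∑_{i=1}^N (Δ_k x̃_{it})²] / [∑_{k'=1}^{T−1} ∑_{t'=1}^{T−k'} ∑_{i=1}^N (Δ_{k'} x̃_{it'})²]. Then the β-component of any minimizer of the TWFE least-squares objective equals ∑_{k=1}^{T−1} ω̂_k^FD β̂_k^FD, where each ω̂_k^FD ≥ 0 and ∑_{k=1}^{T−1} ω̂_k^FD = 1. -/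
open Finset

lemma foc_zero (M L : ℝ) (hM : 0 ≤ M) (h : ∀ ε : ℝ, 0 ≤ M * ε ^ 2 + L * ε) : L = 0 := by
  by_contra hL
  have hA : (0:ℝ) < M + 1 := by linarith
  have hne : M + 1 ≠ 0 := ne_of_gt hA
  have h1 := h (-(L / (M + 1)))
  have he : L / (M + 1) ≠ 0 := div_ne_zero hL hne
  have hkey : M * (-(L / (M + 1))) ^ 2 + L * -(L / (M + 1)) = -((L / (M + 1)) ^ 2) := by
    field_simp
    ring
  rw [hkey] at h1
  have hp : 0 < (L / (M + 1)) ^ 2 := by positivity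
  linarith

lemma lem_center (T : ℕ) (hT0 : (T:ℝ) ≠ 0) (a b : ℕ → ℝ) :
    (T:ℝ) * ∑ t ∈ range T, (a t - (1/(T:ℝ)) * ∑ s ∈ range T, a s) * (b t - (1/(T:ℝ)) * ∑ s ∈ range T, b s)
      = (T:ℝ) * ∑ t ∈ range T, a t * b t - (∑ t ∈ range T, a t) * (∑ t ∈ range T, b t) := by
  simp only [sub_mul, mul_sub, Finset.sum_sub_distrib, ← Finset.mul_sum, ← Finset.sum_mul,
    Finset.sum_const, card_range, nsmul_eq_mul]
  field_simp
  try ring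

lemma L1 (T : ℕ) (a b : ℕ → ℝ) :
    ∑ s ∈ range T, ∑ t ∈ range s, (a s - a t) * (b s - b t)
      = (T:ℝ) * ∑ t ∈ range T, a t * b t - (∑ t ∈ range T, a t) * (∑ t ∈ range T, b t) := by
  induction T with
  | zero => simp
  | succ n ih =>
    rw [Finset.sum_range_succ, ih]
    rw [Finset.sum_range_succ (f := fun t => a t * b t), Finset.sum_range_succ (f := a),
      Finset.sum_range_succ (f := b)]
    have expand : ∑ t ∈ range n, (a n - a t) * (b n - b t)
        = (n:ℝ) * (a n * b n) - a n * ∑ t ∈ range n, b t - b n * ∑ t ∈ range n, a t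
          + ∑ t ∈ range n, a t * b t := by
      simp only [sub_mul, mul_sub, Finset.sum_sub_distrib, ← Finset.mul_sum, ← Finset.sum_mul,
        Finset.sum_const, card_range, nsmul_eq_mul]
      ring
    rw [expand]
    push_cast
    ring

lemma reindex (T : ℕ) (f : ℕ → ℕ → ℝ) :
    ∑ s ∈ range T, ∑ t ∈ range s, f t s
      = ∑ k ∈ Icc 1 (T - 1), ∑ t ∈ range (T - k), f t (t + k) := by
  rw [Finset.sum_sigma', Finset.sum_sigma']
  apply Finset.sum_bij' (i := fun p _ => (⟨p.1 - p.2, p.2⟩ : Σ _ : ℕ, ℕ))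
    (j := fun p _ => (⟨p.2 + p.1, p.2⟩ : Σ _ : ℕ, ℕ))
  · intro p hp
    simp only [Finset.mem_sigma, Finset.mem_range, Finset.mem_Icc] at hp ⊢
    omega
  · intro p hp
    simp only [Finset.mem_sigma, Finset.mem_range, Finset.mem_Icc] at hp ⊢
    omega
  · rintro ⟨s, t⟩ hp
    simp only [Finset.mem_sigma, Finset.mem_range] at hp
    simp only
    congr 1
    omega
  · rintro ⟨k, t⟩ hp
    simp only [Finset.mem_sigma, Finset.mem_range, Finset.mem_Icc] at hp
    simp only
    congr 1
    omega
  · rintro ⟨s, t⟩ hp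
    simp only [Finset.mem_sigma, Finset.mem_range] at hp
    simp only
    congr 1
    omega

lemma centered_to_fd (T : ℕ) (hT0 : (T:ℝ) ≠ 0) (a b : ℕ → ℝ) :
    (T:ℝ) * ∑ t ∈ range T, (a t - (1/(T:ℝ)) * ∑ s ∈ range T, a s) * (b t - (1/(T:ℝ)) * ∑ s ∈ range T, b s)
      = ∑ k ∈ Icc 1 (T - 1), ∑ t ∈ range (T - k), (a (t + k) - a t) * (b (t + k) - b t) := by
  rw [lem_center T hT0 a b, ← L1, reindex T (fun t s => (a s - a t) * (b s - b t))]

/-- Corollary: the β-component of any minimizer of the TWFE least-squares objective (with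
the normalization `γ_T = 0`) is the convex combination `∑_{k=1}^{T−1} ω̂_k^FD β̂_k^FD` of the
k-period FD estimators, where the weights are nonnegative and sum to one.
Periods are indexed `0, …, T−1`. -/
theorem twfe_eq_weighted_fd (N T : ℕ) (hN : 1 ≤ N) (hT : 2 ≤ T)
    (y x ty tx : ℕ → ℕ → ℝ)
    (hty : ∀ i t, ty i t = y i t - (1 / (N : ℝ)) * ∑ j ∈ range N, y j t)
    (htx : ∀ i t, tx i t = x i t - (1 / (N : ℝ)) * ∑ j ∈ range N, x j t)
    (hpos : ∀ k ∈ Icc 1 (T - 1),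
      0 < ∑ t ∈ range (T - k), ∑ i ∈ range N, (tx i (t + k) - tx i t) ^ 2)
    (βFD ωFD : ℕ → ℝ)
    (hβFD : ∀ k, βFD k =
      (∑ t ∈ range (T - k), ∑ i ∈ range N, (ty i (t + k) - ty i t) * (tx i (t + k) - tx i t)) /
      (∑ t ∈ range (T - k), ∑ i ∈ range N, (tx i (t + k) - tx i t) ^ 2))
    (hωFD : ∀ k, ωFD k =
      (∑ t ∈ range (T - k), ∑ i ∈ range N, (tx i (t + k) - tx i t) ^ 2) /
      (∑ k' ∈ Icc 1 (T - 1), ∑ t' ∈ range (T - k'), ∑ i ∈ range N,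
        (tx i (t' + k') - tx i t') ^ 2))
    (α : ℕ → ℝ) (β : ℝ) (γ : ℕ → ℝ) (hγ : γ (T - 1) = 0)
    (hmin : ∀ (α' : ℕ → ℝ) (β' : ℝ) (γ' : ℕ → ℝ), γ' (T - 1) = 0 →
      ∑ i ∈ range N, ∑ t ∈ range T, (y i t - α i - β * x i t - γ t) ^ 2 ≤
        ∑ i ∈ range N, ∑ t ∈ range T, (y i t - α' i - β' * x i t - γ' t) ^ 2) :
    β = ∑ k ∈ Icc 1 (T - 1), ωFD k * βFD k ∧
      (∀ k ∈ Icc 1 (T - 1), 0 ≤ ωFD k) ∧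
      ∑ k ∈ Icc 1 (T - 1), ωFD k = 1 := by
  have hN0 : (N:ℝ) ≠ 0 := Nat.cast_ne_zero.mpr (by omega)
  have hT0 : (T:ℝ) ≠ 0 := Nat.cast_ne_zero.mpr (by omega)
  set r : ℕ → ℕ → ℝ := fun i t => y i t - α i - β * x i t - γ t with hrdef
  -- First-order condition in β
  have focβ : ∑ i ∈ range N, ∑ t ∈ range T, x i t * r i t = 0 := by
    have h0 : (-2) * ∑ i ∈ range N, ∑ t ∈ range T, x i t * r i t = 0 := by
      apply foc_zero (∑ i ∈ range N, ∑ t ∈ range T, (x i t) ^ 2)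
      · positivity
      · intro ε
        have h := hmin α (β + ε) γ hγ
        have e : ∑ i ∈ range N, ∑ t ∈ range T, (y i t - α i - (β + ε) * x i t - γ t) ^ 2
            = ∑ i ∈ range N, ∑ t ∈ range T, (y i t - α i - β * x i t - γ t) ^ 2
              + ((∑ i ∈ range N, ∑ t ∈ range T, (x i t) ^ 2) * ε ^ 2
                + ((-2) * ∑ i ∈ range N, ∑ t ∈ range T, x i t * r i t) * ε) := by
          have pointwise : ∀ i t, (y i t - α i - (β + ε) * x i t - γ t) ^ 2
              = (y i t - α i - β * x i t - γ t) ^ 2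
                + ((x i t) ^ 2 * ε ^ 2 + (-2) * (x i t * r i t) * ε) := by
            intro i t
            simp only [hrdef]
            ring
          calc ∑ i ∈ range N, ∑ t ∈ range T, (y i t - α i - (β + ε) * x i t - γ t) ^ 2
              = ∑ i ∈ range N, ∑ t ∈ range T, ((y i t - α i - β * x i t - γ t) ^ 2
                + ((x i t) ^ 2 * ε ^ 2 + (-2) * (x i t * r i t) * ε)) :=
                Finset.sum_congr rfl fun i _ => Finset.sum_congr rfl fun t _ => pointwise i t
            _ = _ := by
                simp only [Finset.sum_add_distrib, ← Finset.sum_mul, ← Finset.mul_sum]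
        rw [e] at h
        linarith
    linarith
  -- First-order conditions in α
  have focα : ∀ i0 ∈ range N, ∑ t ∈ range T, r i0 t = 0 := by
    intro i0 hi0
    have h0 : (-2) * ∑ t ∈ range T, r i0 t = 0 := by
      apply foc_zero (T : ℝ)
      · positivity
      · intro ε
        have h := hmin (fun i => if i = i0 then α i + ε else α i) β γ hγ
        have e : ∑ i ∈ range N, ∑ t ∈ range T,
              (y i t - (if i = i0 then α i + ε else α i) - β * x i t - γ t) ^ 2
            = ∑ i ∈ range N, ∑ t ∈ range T, (y i t - α i - β * x i t - γ t) ^ 2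
              + ((T : ℝ) * ε ^ 2 + ((-2) * ∑ t ∈ range T, r i0 t) * ε) := by
          have pointwise : ∀ i t, (y i t - (if i = i0 then α i + ε else α i) - β * x i t - γ t) ^ 2
              = (y i t - α i - β * x i t - γ t) ^ 2
                + (if i = i0 then ε ^ 2 + (-2) * r i t * ε else 0) := by
            intro i t
            by_cases hii : i = i0
            · simp only [hii, if_pos, hrdef]
              ring
            · simp [hii]
          have step1 : ∑ i ∈ range N, ∑ t ∈ range T,
                (y i t - (if i = i0 then α i + ε else α i) - β * x i t - γ t) ^ 2
              = ∑ i ∈ range N, ∑ t ∈ range T, (y i t - α i - β * x i t - γ t) ^ 2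
                + ∑ i ∈ range N, (if i = i0 then ∑ t ∈ range T, (ε ^ 2 + (-2) * r i t * ε) else 0) := by
            rw [← Finset.sum_add_distrib]
            refine Finset.sum_congr rfl fun i _ => ?_
            calc ∑ t ∈ range T, (y i t - (if i = i0 then α i + ε else α i) - β * x i t - γ t) ^ 2
                = ∑ t ∈ range T, ((y i t - α i - β * x i t - γ t) ^ 2
                    + (if i = i0 then ε ^ 2 + (-2) * r i t * ε else 0)) :=
                  Finset.sum_congr rfl fun t _ => pointwise i t
              _ = ∑ t ∈ range T, (y i t - α i - β * x i t - γ t) ^ 2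
                    + ∑ t ∈ range T, (if i = i0 then ε ^ 2 + (-2) * r i t * ε else 0) :=
                  Finset.sum_add_distrib
              _ = ∑ t ∈ range T, (y i t - α i - β * x i t - γ t) ^ 2
                    + (if i = i0 then ∑ t ∈ range T, (ε ^ 2 + (-2) * r i t * ε) else 0) := by
                  by_cases hii : i = i0 <;> simp [hii]
          rw [step1, Finset.sum_ite_eq' (range N) i0, if_pos hi0]
          congr 1
          rw [Finset.sum_add_distrib, Finset.sum_const, card_range, nsmul_eq_mul,
            ← Finset.sum_mul, ← Finset.mul_sum]
        rw [e] at h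
        linarith
    linarith
  -- First-order conditions in γ (all periods)
  have focγ : ∀ t0 ∈ range T, ∑ i ∈ range N, r i t0 = 0 := by
    have focγ' : ∀ t0 ∈ range T, t0 ≠ T - 1 → ∑ i ∈ range N, r i t0 = 0 := by
      intro t0 ht0 hne
      have h0 : (-2) * ∑ i ∈ range N, r i t0 = 0 := by
        apply foc_zero (N : ℝ)
        · positivity
        · intro ε
          have hγ' : (if T - 1 = t0 then γ (T - 1) + ε else γ (T - 1)) = 0 := by
            rw [if_neg (fun hc => hne hc.symm), hγ]
          have h := hmin α β (fun t => if t = t0 then γ t + ε else γ t) hγ'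
          have e : ∑ i ∈ range N, ∑ t ∈ range T,
                (y i t - α i - β * x i t - (if t = t0 then γ t + ε else γ t)) ^ 2
              = ∑ i ∈ range N, ∑ t ∈ range T, (y i t - α i - β * x i t - γ t) ^ 2
                + ((N : ℝ) * ε ^ 2 + ((-2) * ∑ i ∈ range N, r i t0) * ε) := by
            have pointwise : ∀ i t, (y i t - α i - β * x i t - (if t = t0 then γ t + ε else γ t)) ^ 2
                = (y i t - α i - β * x i t - γ t) ^ 2
                  + (if t = t0 then ε ^ 2 + (-2) * r i t * ε else 0) := by
              intro i t
              by_cases htt : t = t0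
              · simp only [htt, if_pos, hrdef]
                ring
              · simp [htt]
            have step1 : ∑ i ∈ range N, ∑ t ∈ range T,
                  (y i t - α i - β * x i t - (if t = t0 then γ t + ε else γ t)) ^ 2
                = ∑ i ∈ range N, ∑ t ∈ range T, (y i t - α i - β * x i t - γ t) ^ 2
                  + ∑ i ∈ range N, (ε ^ 2 + (-2) * r i t0 * ε) := by
              rw [← Finset.sum_add_distrib]
              refine Finset.sum_congr rfl fun i _ => ?_
              calc ∑ t ∈ range T, (y i t - α i - β * x i t - (if t = t0 then γ t + ε else γ t)) ^ 2
                  = ∑ t ∈ range T, ((y i t - α i - β * x i t - γ t) ^ 2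
                      + (if t = t0 then ε ^ 2 + (-2) * r i t * ε else 0)) :=
                    Finset.sum_congr rfl fun t _ => pointwise i t
                _ = ∑ t ∈ range T, (y i t - α i - β * x i t - γ t) ^ 2
                      + ∑ t ∈ range T, (if t = t0 then ε ^ 2 + (-2) * r i t * ε else 0) :=
                    Finset.sum_add_distrib
                _ = ∑ t ∈ range T, (y i t - α i - β * x i t - γ t) ^ 2
                      + (ε ^ 2 + (-2) * r i t0 * ε) := by
                    rw [Finset.sum_ite_eq' (range T) t0, if_pos ht0]
            rw [step1]
            congr 1
            rw [Finset.sum_add_distrib, Finset.sum_const, card_range, nsmul_eq_mul,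
              ← Finset.sum_mul, ← Finset.mul_sum]
          rw [e] at h
          linarith
      linarith
    intro t0 ht0
    by_cases hne : t0 = T - 1
    · subst hne
      have htotal : ∑ t ∈ range T, ∑ i ∈ range N, r i t = 0 := by
        rw [Finset.sum_comm]
        exact Finset.sum_eq_zero focα
      have hmem : T - 1 ∈ range T := by simp; omega
      rw [← Finset.sum_erase_add (range T) _ hmem] at htotal
      have herase : ∑ t ∈ (range T).erase (T - 1), ∑ i ∈ range N, r i t = 0 := by
        apply Finset.sum_eq_zero
        intro t ht
        exact focγ' t (Finset.mem_of_mem_erase ht) (Finset.ne_of_mem_erase ht)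
      linarith
    · exact focγ' t0 ht0 hne
  -- centered (double-demeaned) variables
  set mx : ℕ → ℝ := fun i => (1/(T:ℝ)) * ∑ s ∈ range T, tx i s with hmxdef
  set my : ℕ → ℝ := fun i => (1/(T:ℝ)) * ∑ s ∈ range T, ty i s with hmydef
  set dx : ℕ → ℕ → ℝ := fun i t => tx i t - mx i with hdxdef
  set dy : ℕ → ℕ → ℝ := fun i t => ty i t - my i with hdydef
  have Ptx : ∀ t, ∑ i ∈ range N, tx i t = 0 := by
    intro t
    simp only [htx]
    rw [Finset.sum_sub_distrib, Finset.sum_const, card_range, nsmul_eq_mul]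
    field_simp
    ring
  have Pmx : ∑ i ∈ range N, mx i = 0 := by
    simp only [hmxdef]
    rw [← Finset.mul_sum, Finset.sum_comm]
    simp only [Ptx]
    simp
  have Pdxt : ∀ t, ∑ i ∈ range N, dx i t = 0 := by
    intro t
    simp only [hdxdef]
    rw [Finset.sum_sub_distrib, Ptx, Pmx, sub_zero]
  have Pdxi : ∀ i, ∑ t ∈ range T, dx i t = 0 := by
    intro i
    simp only [hdxdef, hmxdef]
    rw [Finset.sum_sub_distrib, Finset.sum_const, card_range, nsmul_eq_mul]
    field_simp
    ring
  have C1 : ∑ i ∈ range N, ∑ t ∈ range T, dx i t * r i t = 0 := by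
    have pointwise : ∀ i t, dx i t * r i t
        = x i t * r i t - ((1/(N:ℝ)) * ∑ j ∈ range N, x j t) * r i t - mx i * r i t := by
      intro i t
      simp only [hdxdef, htx]
      ring
    have h2 : ∑ i ∈ range N, ∑ t ∈ range T, ((1/(N:ℝ)) * ∑ j ∈ range N, x j t) * r i t = 0 := by
      rw [Finset.sum_comm]
      apply Finset.sum_eq_zero
      intro t ht
      rw [← Finset.mul_sum, focγ t ht, mul_zero]
    have h3 : ∑ i ∈ range N, ∑ t ∈ range T, mx i * r i t = 0 := by
      apply Finset.sum_eq_zero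
      intro i hi
      rw [← Finset.mul_sum, focα i hi, mul_zero]
    calc ∑ i ∈ range N, ∑ t ∈ range T, dx i t * r i t
        = ∑ i ∈ range N, ∑ t ∈ range T, (x i t * r i t
            - ((1/(N:ℝ)) * ∑ j ∈ range N, x j t) * r i t - mx i * r i t) :=
          Finset.sum_congr rfl fun i _ => Finset.sum_congr rfl fun t _ => pointwise i t
      _ = ∑ i ∈ range N, ∑ t ∈ range T, x i t * r i t
            - ∑ i ∈ range N, ∑ t ∈ range T, ((1/(N:ℝ)) * ∑ j ∈ range N, x j t) * r i t
            - ∑ i ∈ range N, ∑ t ∈ range T, mx i * r i t := by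
          simp only [Finset.sum_sub_distrib]
      _ = 0 := by rw [focβ, h2, h3]; ring
  have C2 : ∑ i ∈ range N, ∑ t ∈ range T, dx i t * r i t
      = ∑ i ∈ range N, ∑ t ∈ range T, dx i t * dy i t
        - β * ∑ i ∈ range N, ∑ t ∈ range T, dx i t * dx i t := by
    have pointwise : ∀ i t, dx i t * r i t
        = dx i t * dy i t - β * (dx i t * dx i t)
          + (my i - β * mx i - α i) * dx i t
          + ((1/(N:ℝ)) * ∑ j ∈ range N, y j t - β * ((1/(N:ℝ)) * ∑ j ∈ range N, x j t) - γ t)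
              * dx i t := by
      intro i t
      simp only [hrdef, hdydef, hty i t]
      have hx' : x i t = tx i t + (1/(N:ℝ)) * ∑ j ∈ range N, x j t := by rw [htx]; ring
      rw [hx']
      ring
    have h3 : ∑ i ∈ range N, ∑ t ∈ range T, (my i - β * mx i - α i) * dx i t = 0 := by
      apply Finset.sum_eq_zero
      intro i _
      rw [← Finset.mul_sum, Pdxi i, mul_zero]
    have h4 : ∑ i ∈ range N, ∑ t ∈ range T,
        ((1/(N:ℝ)) * ∑ j ∈ range N, y j t - β * ((1/(N:ℝ)) * ∑ j ∈ range N, x j t) - γ t)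
          * dx i t = 0 := by
      rw [Finset.sum_comm]
      apply Finset.sum_eq_zero
      intro t _
      rw [← Finset.mul_sum, Pdxt t, mul_zero]
    calc ∑ i ∈ range N, ∑ t ∈ range T, dx i t * r i t
        = ∑ i ∈ range N, ∑ t ∈ range T, (dx i t * dy i t - β * (dx i t * dx i t)
            + (my i - β * mx i - α i) * dx i t
            + ((1/(N:ℝ)) * ∑ j ∈ range N, y j t - β * ((1/(N:ℝ)) * ∑ j ∈ range N, x j t) - γ t)
                * dx i t) :=
          Finset.sum_congr rfl fun i _ => Finset.sum_congr rfl fun t _ => pointwise i t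
      _ = ∑ i ∈ range N, ∑ t ∈ range T, dx i t * dy i t
            - β * ∑ i ∈ range N, ∑ t ∈ range T, dx i t * dx i t
            + ∑ i ∈ range N, ∑ t ∈ range T, (my i - β * mx i - α i) * dx i t
            + ∑ i ∈ range N, ∑ t ∈ range T,
                ((1/(N:ℝ)) * ∑ j ∈ range N, y j t - β * ((1/(N:ℝ)) * ∑ j ∈ range N, x j t) - γ t)
                  * dx i t := by
          simp only [Finset.sum_add_distrib, Finset.sum_sub_distrib, ← Finset.mul_sum]
      _ = _ := by rw [h3, h4]; ring
  have key : β * ∑ i ∈ range N, ∑ t ∈ range T, dx i t * dx i t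
      = ∑ i ∈ range N, ∑ t ∈ range T, dx i t * dy i t := by linarith [C1, C2.symm.trans C1]
  -- pass to first differences
  have hxx : ∀ i, (T:ℝ) * ∑ t ∈ range T, dx i t * dx i t
      = ∑ k ∈ Icc 1 (T - 1), ∑ t ∈ range (T - k), (tx i (t + k) - tx i t) * (tx i (t + k) - tx i t) := by
    intro i
    simp only [hdxdef, hmxdef]
    exact centered_to_fd T hT0 (tx i) (tx i)
  have hxy : ∀ i, (T:ℝ) * ∑ t ∈ range T, dx i t * dy i t
      = ∑ k ∈ Icc 1 (T - 1), ∑ t ∈ range (T - k), (tx i (t + k) - tx i t) * (ty i (t + k) - ty i t) := by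
    intro i
    simp only [hdxdef, hdydef, hmxdef, hmydef]
    exact centered_to_fd T hT0 (tx i) (ty i)
  have e1 : (T:ℝ) * ∑ i ∈ range N, ∑ t ∈ range T, dx i t * dx i t
      = ∑ k ∈ Icc 1 (T - 1), ∑ t ∈ range (T - k), ∑ i ∈ range N, (tx i (t + k) - tx i t) ^ 2 := by
    rw [Finset.mul_sum]
    calc ∑ i ∈ range N, (T:ℝ) * ∑ t ∈ range T, dx i t * dx i t
        = ∑ i ∈ range N, ∑ k ∈ Icc 1 (T - 1), ∑ t ∈ range (T - k),
            (tx i (t + k) - tx i t) * (tx i (t + k) - tx i t) :=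
          Finset.sum_congr rfl fun i _ => hxx i
      _ = ∑ k ∈ Icc 1 (T - 1), ∑ i ∈ range N, ∑ t ∈ range (T - k),
            (tx i (t + k) - tx i t) * (tx i (t + k) - tx i t) := Finset.sum_comm
      _ = ∑ k ∈ Icc 1 (T - 1), ∑ t ∈ range (T - k), ∑ i ∈ range N,
            (tx i (t + k) - tx i t) ^ 2 := by
          refine Finset.sum_congr rfl fun k _ => ?_
          rw [Finset.sum_comm]
          exact Finset.sum_congr rfl fun t _ => Finset.sum_congr rfl fun i _ => (pow_two _).symm
  have e2 : (T:ℝ) * ∑ i ∈ range N, ∑ t ∈ range T, dx i t * dy i t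
      = ∑ k ∈ Icc 1 (T - 1), ∑ t ∈ range (T - k), ∑ i ∈ range N,
          (ty i (t + k) - ty i t) * (tx i (t + k) - tx i t) := by
    rw [Finset.mul_sum]
    calc ∑ i ∈ range N, (T:ℝ) * ∑ t ∈ range T, dx i t * dy i t
        = ∑ i ∈ range N, ∑ k ∈ Icc 1 (T - 1), ∑ t ∈ range (T - k),
            (tx i (t + k) - tx i t) * (ty i (t + k) - ty i t) :=
          Finset.sum_congr rfl fun i _ => hxy i
      _ = ∑ k ∈ Icc 1 (T - 1), ∑ i ∈ range N, ∑ t ∈ range (T - k),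
            (tx i (t + k) - tx i t) * (ty i (t + k) - ty i t) := Finset.sum_comm
      _ = ∑ k ∈ Icc 1 (T - 1), ∑ t ∈ range (T - k), ∑ i ∈ range N,
            (ty i (t + k) - ty i t) * (tx i (t + k) - tx i t) := by
          refine Finset.sum_congr rfl fun k _ => ?_
          rw [Finset.sum_comm]
          exact Finset.sum_congr rfl fun t _ => Finset.sum_congr rfl fun i _ => mul_comm _ _
  have key2 : β * ∑ k ∈ Icc 1 (T - 1), ∑ t ∈ range (T - k), ∑ i ∈ range N,
        (tx i (t + k) - tx i t) ^ 2
      = ∑ k ∈ Icc 1 (T - 1), ∑ t ∈ range (T - k), ∑ i ∈ range N,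
        (ty i (t + k) - ty i t) * (tx i (t + k) - tx i t) := by
    rw [← e1, ← e2]
    linear_combination (T:ℝ) * key
  have hne1 : (1 : ℕ) ∈ Icc 1 (T - 1) := Finset.mem_Icc.mpr ⟨le_refl 1, by omega⟩
  have hDEN : 0 < ∑ k ∈ Icc 1 (T - 1), ∑ t ∈ range (T - k), ∑ i ∈ range N,
      (tx i (t + k) - tx i t) ^ 2 :=
    Finset.sum_pos hpos ⟨1, hne1⟩
  refine ⟨?_, fun k hk => by rw [hωFD]; exact div_nonneg (hpos k hk).le hDEN.le, ?_⟩
  · have hβ : β = (∑ k ∈ Icc 1 (T - 1), ∑ t ∈ range (T - k), ∑ i ∈ range N,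
          (ty i (t + k) - ty i t) * (tx i (t + k) - tx i t))
        / (∑ k ∈ Icc 1 (T - 1), ∑ t ∈ range (T - k), ∑ i ∈ range N,
          (tx i (t + k) - tx i t) ^ 2) := by
      rw [eq_div_iff hDEN.ne']
      exact key2
    rw [hβ]
    symm
    calc ∑ k ∈ Icc 1 (T - 1), ωFD k * βFD k
        = ∑ k ∈ Icc 1 (T - 1),
            (∑ t ∈ range (T - k), ∑ i ∈ range N, (ty i (t + k) - ty i t) * (tx i (t + k) - tx i t))
            / (∑ k' ∈ Icc 1 (T - 1), ∑ t' ∈ range (T - k'), ∑ i ∈ range N,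
                (tx i (t' + k') - tx i t') ^ 2) := by
          refine Finset.sum_congr rfl fun k hk => ?_
          rw [hωFD, hβFD]
          have hd := (hpos k hk).ne'
          field_simp
      _ = _ := by rw [← Finset.sum_div]
  · calc ∑ k ∈ Icc 1 (T - 1), ωFD k
        = ∑ k ∈ Icc 1 (T - 1), (∑ t ∈ range (T - k), ∑ i ∈ range N, (tx i (t + k) - tx i t) ^ 2)
          / (∑ k' ∈ Icc 1 (T - 1), ∑ t' ∈ range (T - k'), ∑ i ∈ range N,
              (tx i (t' + k') - tx i t') ^ 2) :=
        Finset.sum_congr rfl fun k _ => hωFD k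
      _ = 1 := by rw [← Finset.sum_div]; exact div_self hDEN.ne'
end

section
/- Suppose that for every pair of periods s > t one has ∑_{i=1}^N (x̃_{is} − x̃_{it})² > 0, and let β̂_{s,t}^FE = [∑_{i=1}^N (ỹ_{is} − ỹ_{it})(x̃_{is} − x̃_{it})] / [∑_{i=1}^N (x̃_{is} − x̃_{it})²] and ω̂_{s,t}^FE = [∑_{i=1}^N (x̃_{is} − x̃_{it})²] / [∑_{s'>t'} ∑_{i=1}^N (x̃_{is'} − x̃_{it'})²]. Then the β-component of any minimizer of the TWFE least-squares objective equals ∑_{s>t} ω̂_{s,t}^FE β̂_{s,t}^FE, where each ω̂_{s,t}^FE ≥ 0 and ∑_{s>t} ω̂_{s,t}^FE = 1. -/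
open Finset

private lemma quad_zero (A B : ℝ) (h : ∀ ε : ℝ, 0 ≤ A * ε ^ 2 + B * ε) : B = 0 := by
  by_contra hB
  have hB2 : 0 < B ^ 2 := by positivity
  set c : ℝ := 1 / (|A| + 1) with hc
  have hc0 : 0 < c := by positivity
  have hAc : A * c < 1 := by
    have h1 : A * c ≤ |A| * c := mul_le_mul_of_nonneg_right (le_abs_self A) hc0.le
    have h2 : |A| * c < 1 := by
      rw [hc, mul_one_div, div_lt_one (by positivity)]
      linarith [abs_nonneg A]
    linarith
  have h1 := h (-(B * c))
  nlinarith [mul_pos (mul_pos hB2 hc0) (sub_pos.mpr hAc)]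

private lemma triangle_identity (a b : ℕ → ℝ) (T : ℕ) :
    ∑ s ∈ range T, ∑ t ∈ range s, (a s - a t) * (b s - b t)
      = T * ∑ t ∈ range T, a t * b t - (∑ t ∈ range T, a t) * (∑ t ∈ range T, b t) := by
  induction T with
  | zero => simp
  | succ n ih =>
    rw [Finset.sum_range_succ, ih]
    have h1 : ∀ t : ℕ, (a n - a t) * (b n - b t)
        = a n * b n - a n * b t - b n * a t + a t * b t := fun t => by ring
    simp only [h1, Finset.sum_add_distrib, Finset.sum_sub_distrib, ← Finset.mul_sum,
      Finset.sum_const, Finset.card_range, nsmul_eq_mul]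
    rw [Finset.sum_range_succ (fun t => a t * b t), Finset.sum_range_succ a, Finset.sum_range_succ b]
    push_cast
    ring

/-- Corollary: the β-component of any minimizer of the TWFE least-squares objective (with
the normalization `γ_T = 0`) is the convex combination `∑_{s>t} ω̂_{s,t}^FE β̂_{s,t}^FE` of
the two-period TWFE estimators, where the weights are nonnegative and sum to one.
Periods are indexed `0, …, T−1`. -/
theorem twfe_eq_weighted_two_period (N T : ℕ) (hN : 1 ≤ N) (hT : 2 ≤ T)
    (y x ty tx : ℕ → ℕ → ℝ)
    (hty : ∀ i t, ty i t = y i t - (1 / (N : ℝ)) * ∑ j ∈ range N, y j t)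
    (htx : ∀ i t, tx i t = x i t - (1 / (N : ℝ)) * ∑ j ∈ range N, x j t)
    (hpos : ∀ s ∈ range T, ∀ t ∈ range s,
      0 < ∑ i ∈ range N, (tx i s - tx i t) ^ 2)
    (βFE ωFE : ℕ → ℕ → ℝ)
    (hβFE : ∀ s t, βFE s t =
      (∑ i ∈ range N, (ty i s - ty i t) * (tx i s - tx i t)) /
      (∑ i ∈ range N, (tx i s - tx i t) ^ 2))
    (hωFE : ∀ s t, ωFE s t =
      (∑ i ∈ range N, (tx i s - tx i t) ^ 2) /
      (∑ s' ∈ range T, ∑ t' ∈ range s', ∑ i ∈ range N, (tx i s' - tx i t') ^ 2))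
    (α : ℕ → ℝ) (β : ℝ) (γ : ℕ → ℝ) (hγ : γ (T - 1) = 0)
    (hmin : ∀ (α' : ℕ → ℝ) (β' : ℝ) (γ' : ℕ → ℝ), γ' (T - 1) = 0 →
      ∑ i ∈ range N, ∑ t ∈ range T, (y i t - α i - β * x i t - γ t) ^ 2 ≤
        ∑ i ∈ range N, ∑ t ∈ range T, (y i t - α' i - β' * x i t - γ' t) ^ 2) :
    β = ∑ s ∈ range T, ∑ t ∈ range s, ωFE s t * βFE s t ∧
      (∀ s ∈ range T, ∀ t ∈ range s, 0 ≤ ωFE s t) ∧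
      ∑ s ∈ range T, ∑ t ∈ range s, ωFE s t = 1 := by
  have hN0 : (N : ℝ) ≠ 0 := Nat.cast_ne_zero.mpr (by omega)
  set r : ℕ → ℕ → ℝ := fun i t => y i t - α i - β * x i t - γ t with hr
  -- master first-order condition
  have master : ∀ (a : ℕ → ℝ) (b : ℝ) (c : ℕ → ℝ), c (T - 1) = 0 →
      ∑ i ∈ range N, ∑ t ∈ range T, r i t * (a i + b * x i t + c t) = 0 := by
    intro a b c hc
    have key : (-2) * ∑ i ∈ range N, ∑ t ∈ range T, r i t * (a i + b * x i t + c t) = 0 := by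
      apply quad_zero (∑ i ∈ range N, ∑ t ∈ range T, (a i + b * x i t + c t) ^ 2)
      intro ε
      have h := hmin (fun i => α i + ε * a i) (β + ε * b) (fun t => γ t + ε * c t)
        (by simp [hγ, hc])
      have expand : ∀ i t, (y i t - (α i + ε * a i) - (β + ε * b) * x i t - (γ t + ε * c t)) ^ 2
          = r i t ^ 2 + (a i + b * x i t + c t) ^ 2 * ε ^ 2
            + (-2 * (r i t * (a i + b * x i t + c t))) * ε := by
        intro i t; simp only [hr]; ring
      have hsum : ∑ i ∈ range N, ∑ t ∈ range T,
          (y i t - (α i + ε * a i) - (β + ε * b) * x i t - (γ t + ε * c t)) ^ 2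
          = (∑ i ∈ range N, ∑ t ∈ range T, r i t ^ 2)
            + (∑ i ∈ range N, ∑ t ∈ range T, (a i + b * x i t + c t) ^ 2) * ε ^ 2
            + ((-2) * ∑ i ∈ range N, ∑ t ∈ range T, r i t * (a i + b * x i t + c t)) * ε := by
        simp only [expand, Finset.sum_add_distrib, ← Finset.sum_mul, neg_mul, ← Finset.mul_sum,
          Finset.sum_neg_distrib]
      rw [hsum] at h
      have h' : ∑ i ∈ range N, ∑ t ∈ range T, (y i t - α i - β * x i t - γ t) ^ 2
          = ∑ i ∈ range N, ∑ t ∈ range T, r i t ^ 2 := by simp [hr]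
      rw [h'] at h
      linarith
    linarith
  -- FOC in α_i
  have foc1 : ∀ i ∈ range N, ∑ t ∈ range T, r i t = 0 := by
    intro i hi
    have h := master (fun j => if j = i then 1 else 0) 0 (fun _ => 0) rfl
    have : ∑ j ∈ range N, ∑ t ∈ range T, r j t * ((if j = i then (1:ℝ) else 0) + 0 * x j t + 0)
        = ∑ t ∈ range T, r i t := by
      rw [Finset.sum_eq_single i]
      · simp
      · intro j _ hj; simp [hj]
      · intro h'; exact absurd hi h'
    rw [this] at h; exact h
  -- FOC in γ_t
  have foc2 : ∀ t ∈ range T, ∑ i ∈ range N, r i t = 0 := by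
    have htot : ∑ t ∈ range T, ∑ i ∈ range N, r i t = 0 := by
      have h := master (fun _ => 1) 0 (fun _ => 0) rfl
      rw [Finset.sum_comm]
      simpa using h
    have hpart : ∀ t ∈ range T, t ≠ T - 1 → ∑ i ∈ range N, r i t = 0 := by
      intro t ht hne
      have h := master (fun _ => 0) 0 (fun t' => if t' = t then 1 else 0)
        (by simp [Ne.symm hne])
      have : ∑ i ∈ range N, ∑ t' ∈ range T, r i t' * ((0:ℝ) + 0 * x i t' + if t' = t then 1 else 0)
          = ∑ i ∈ range N, r i t := by
        refine Finset.sum_congr rfl fun i _ => ?_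
        rw [Finset.sum_eq_single t]
        · simp
        · intro t' _ h'; simp [h']
        · intro h'; exact absurd ht h'
      rw [this] at h; exact h
    intro t ht
    by_cases hne : t = T - 1
    · subst hne
      have h1 := (Finset.add_sum_erase (range T) (fun t => ∑ i ∈ range N, r i t) ht).symm
      have h2 : ∑ t' ∈ (range T).erase (T - 1), ∑ i ∈ range N, r i t' = 0 :=
        Finset.sum_eq_zero fun t' ht' =>
          hpart t' (Finset.mem_of_mem_erase ht') (Finset.ne_of_mem_erase ht')
      rw [htot, h2] at h1
      linarith [h1]
    · exact hpart t ht hne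
  -- FOC in β
  have foc3 : ∑ i ∈ range N, ∑ t ∈ range T, r i t * x i t = 0 := by
    have h := master (fun _ => 0) 1 (fun _ => 0) rfl
    simpa using h
  -- FOC in β with demeaned x
  have foc3' : ∑ i ∈ range N, ∑ t ∈ range T, r i t * tx i t = 0 := by
    rw [Finset.sum_comm]
    have step : ∀ t ∈ range T, ∑ i ∈ range N, r i t * tx i t = ∑ i ∈ range N, r i t * x i t := by
      intro t ht
      have : ∑ i ∈ range N, r i t * tx i t
          = ∑ i ∈ range N, r i t * x i t
            - (1 / (N : ℝ) * ∑ j ∈ range N, x j t) * ∑ i ∈ range N, r i t := by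
        rw [Finset.mul_sum, ← Finset.sum_sub_distrib]
        exact Finset.sum_congr rfl fun i _ => by rw [htx]; ring
      rw [this, foc2 t ht, mul_zero, sub_zero]
    rw [Finset.sum_congr rfl step, Finset.sum_comm, foc3]
  -- key pointwise identity
  set δ : ℕ → ℝ := fun i => α i - 1 / (N : ℝ) * ∑ j ∈ range N, α j with hδ
  have hu : ∀ i, ∀ t ∈ range T, ty i t - β * tx i t = r i t + δ i := by
    intro i t ht
    have h0 := foc2 t ht
    have hexp : ∑ j ∈ range N, r j t
        = (∑ j ∈ range N, y j t) - (∑ j ∈ range N, α j) - β * (∑ j ∈ range N, x j t)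
          - N * γ t := by
      simp only [hr, Finset.sum_sub_distrib, Finset.mul_sum, Finset.sum_const,
        Finset.card_range, nsmul_eq_mul]
    rw [hexp] at h0
    rw [hty, htx, hδ]
    simp only [hr]
    field_simp
    linarith [h0]
  -- swap of sums
  have hswap : ∀ F : ℕ → ℕ → ℕ → ℝ,
      ∑ s ∈ range T, ∑ t ∈ range s, ∑ i ∈ range N, F i s t
        = ∑ i ∈ range N, ∑ s ∈ range T, ∑ t ∈ range s, F i s t := by
    intro F
    rw [← Finset.sum_comm]
    exact Finset.sum_congr rfl fun s _ => Finset.sum_comm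
  set D := ∑ s ∈ range T, ∑ t ∈ range s, ∑ i ∈ range N, (tx i s - tx i t) ^ 2 with hD
  set C := ∑ s ∈ range T, ∑ t ∈ range s, ∑ i ∈ range N,
      (ty i s - ty i t) * (tx i s - tx i t) with hC
  have hD' : D = ∑ i ∈ range N, ((T : ℝ) * ∑ t ∈ range T, tx i t * tx i t
      - (∑ t ∈ range T, tx i t) * (∑ t ∈ range T, tx i t)) := by
    rw [hD, hswap]
    refine Finset.sum_congr rfl fun i _ => ?_
    have := triangle_identity (tx i) (tx i) T
    simpa [pow_two] using this
  have hC' : C = ∑ i ∈ range N, ((T : ℝ) * ∑ t ∈ range T, ty i t * tx i t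
      - (∑ t ∈ range T, ty i t) * (∑ t ∈ range T, tx i t)) := by
    rw [hC, hswap]
    exact Finset.sum_congr rfl fun i _ => triangle_identity (ty i) (tx i) T
  have hterm : ∀ i ∈ range N,
      ((T : ℝ) * ∑ t ∈ range T, ty i t * tx i t
        - (∑ t ∈ range T, ty i t) * (∑ t ∈ range T, tx i t))
      - β * ((T : ℝ) * ∑ t ∈ range T, tx i t * tx i t
        - (∑ t ∈ range T, tx i t) * (∑ t ∈ range T, tx i t))
      = (T : ℝ) * ∑ t ∈ range T, r i t * tx i t := by
    intro i hi
    have e1 : ∑ t ∈ range T, ty i t * tx i t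
        = β * ∑ t ∈ range T, tx i t * tx i t + ∑ t ∈ range T, r i t * tx i t
          + δ i * ∑ t ∈ range T, tx i t := by
      rw [Finset.mul_sum, Finset.mul_sum, ← Finset.sum_add_distrib, ← Finset.sum_add_distrib]
      exact Finset.sum_congr rfl fun t ht => by linear_combination tx i t * hu i t ht
    have e2 : ∑ t ∈ range T, ty i t = β * ∑ t ∈ range T, tx i t + (T : ℝ) * δ i := by
      have h : ∑ t ∈ range T, ty i t = ∑ t ∈ range T, (β * tx i t + r i t + δ i) :=
        Finset.sum_congr rfl fun t ht => by linear_combination hu i t ht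
      rw [h, Finset.sum_add_distrib, Finset.sum_add_distrib, ← Finset.mul_sum, foc1 i hi,
        Finset.sum_const, Finset.card_range, nsmul_eq_mul]
      ring
    rw [e1, e2]; ring
  have hkey : C - β * D = 0 := by
    rw [hD', hC', Finset.mul_sum, ← Finset.sum_sub_distrib, Finset.sum_congr rfl hterm,
      ← Finset.mul_sum, foc3', mul_zero]
  have hD0 : 0 < D := by
    rw [hD]
    apply Finset.sum_pos'
      (fun s _ => Finset.sum_nonneg fun t _ => Finset.sum_nonneg fun i _ => sq_nonneg _)
    refine ⟨1, Finset.mem_range.mpr (by omega), ?_⟩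
    apply Finset.sum_pos' (fun t _ => Finset.sum_nonneg fun i _ => sq_nonneg _)
    exact ⟨0, Finset.mem_range.mpr one_pos,
      hpos 1 (Finset.mem_range.mpr (by omega)) 0 (Finset.mem_range.mpr one_pos)⟩
  refine ⟨?_, ?_, ?_⟩
  · have hterm' : ∀ s ∈ range T, ∀ t ∈ range s, ωFE s t * βFE s t
        = (∑ i ∈ range N, (ty i s - ty i t) * (tx i s - tx i t)) / D := by
      intro s hs t ht
      have hA := hpos s hs t ht
      rw [hωFE, hβFE]
      field_simp
    have : ∑ s ∈ range T, ∑ t ∈ range s, ωFE s t * βFE s t = C / D := by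
      rw [hC, Finset.sum_div]
      refine Finset.sum_congr rfl fun s hs => ?_
      rw [Finset.sum_div]
      exact Finset.sum_congr rfl fun t ht => hterm' s hs t ht
    rw [this, eq_div_iff hD0.ne']
    linarith [hkey]
  · intro s hs t ht
    rw [hωFE]
    exact div_nonneg (Finset.sum_nonneg fun i _ => sq_nonneg _) hD0.le
  · calc ∑ s ∈ range T, ∑ t ∈ range s, ωFE s t
        = ∑ s ∈ range T, ∑ t ∈ range s, (∑ i ∈ range N, (tx i s - tx i t) ^ 2) / D :=
          Finset.sum_congr rfl fun s _ => Finset.sum_congr rfl fun t _ => hωFE s t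
      _ = D / D := by
          rw [hD, Finset.sum_div]
          exact Finset.sum_congr rfl fun s _ => (Finset.sum_div _ _ _).symm
      _ = 1 := div_self hD0.ne'
end

section
/- If ∑_{i=1}^N ∑_{t=1}^T (x̃_{it} − x̄̃_i)² > 0, then the β-component of any minimizer of the TWFE least-squares objective equals [∑_{i=1}^N ∑_{t=1}^T (ỹ_{it} − ȳ̃_i)(x̃_{it} − x̄̃_i)] / [∑_{i=1}^N ∑_{t=1}^T (x̃_{it} − x̄̃_i)²] (the double-demeaned within-estimator representation). -/
open Finset

lemma foc_zero_s10 (A B : ℝ) (h : ∀ s : ℝ, 0 ≤ A * s + B * s ^ 2) : A = 0 := by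
  by_contra hA
  set ε : ℝ := 1 / (|B| + 1) with hε
  have hεpos : (0:ℝ) < ε := by positivity
  have h1 := h (-(A * ε))
  have hB := le_abs_self B
  have hA2 : 0 < A ^ 2 := by positivity
  have he : |B| * ε = 1 - ε := by
    rw [hε]; field_simp; ring
  have hBe : B * ε ≤ 1 - ε := by
    calc B * ε ≤ |B| * ε := by nlinarith
    _ = 1 - ε := he
  nlinarith [mul_pos hA2 hεpos, mul_pos (mul_pos hA2 hεpos) hεpos]

lemma expand_sq {ι : Type*} (s : Finset ι) (f g : ι → ℝ) (c : ℝ) :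
    ∑ i ∈ s, (f i - c * g i) ^ 2 =
      ∑ i ∈ s, f i ^ 2 - 2 * c * ∑ i ∈ s, f i * g i + c ^ 2 * ∑ i ∈ s, g i ^ 2 := by
  rw [Finset.mul_sum, Finset.mul_sum, ← Finset.sum_sub_distrib, ← Finset.sum_add_distrib]
  exact Finset.sum_congr rfl fun i _ => by ring

/-- Within-estimator representation: the β-component of any minimizer of the TWFE
least-squares objective (with the normalization `γ_T = 0`) equals
`[∑_i ∑_t (ỹ_it − ȳ̃_i)(x̃_it − x̄̃_i)] / [∑_i ∑_t (x̃_it − x̄̃_i)²]`,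
provided the denominator is positive. Periods are indexed `0, …, T−1`. -/
theorem twfe_eq_within_ratio (N T : ℕ) (hN : 1 ≤ N) (hT : 2 ≤ T)
    (y x ty tx : ℕ → ℕ → ℝ) (tybar txbar : ℕ → ℝ)
    (hty : ∀ i t, ty i t = y i t - (1 / (N : ℝ)) * ∑ j ∈ range N, y j t)
    (htx : ∀ i t, tx i t = x i t - (1 / (N : ℝ)) * ∑ j ∈ range N, x j t)
    (htybar : ∀ i, tybar i = (1 / (T : ℝ)) * ∑ t ∈ range T, ty i t)
    (htxbar : ∀ i, txbar i = (1 / (T : ℝ)) * ∑ t ∈ range T, tx i t)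
    (hpos : 0 < ∑ i ∈ range N, ∑ t ∈ range T, (tx i t - txbar i) ^ 2)
    (α : ℕ → ℝ) (β : ℝ) (γ : ℕ → ℝ) (hγ : γ (T - 1) = 0)
    (hmin : ∀ (α' : ℕ → ℝ) (β' : ℝ) (γ' : ℕ → ℝ), γ' (T - 1) = 0 →
      ∑ i ∈ range N, ∑ t ∈ range T, (y i t - α i - β * x i t - γ t) ^ 2 ≤
        ∑ i ∈ range N, ∑ t ∈ range T, (y i t - α' i - β' * x i t - γ' t) ^ 2) :
    β = (∑ i ∈ range N, ∑ t ∈ range T, (ty i t - tybar i) * (tx i t - txbar i)) /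
        (∑ i ∈ range N, ∑ t ∈ range T, (tx i t - txbar i) ^ 2) := by
  have hN0 : (N : ℝ) ≠ 0 := Nat.cast_ne_zero.2 (by omega)
  have hT0 : (T : ℝ) ≠ 0 := Nat.cast_ne_zero.2 (by omega)
  set m : ℕ → ℝ := fun t => (1 / (N : ℝ)) * ∑ j ∈ range N, x j t with hm
  set my : ℕ → ℝ := fun t => (1 / (N : ℝ)) * ∑ j ∈ range N, y j t with hmy
  set u : ℕ → ℕ → ℝ := fun i t => tx i t - txbar i with hudef
  set v : ℕ → ℕ → ℝ := fun i t => ty i t - tybar i with hvdef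
  have hu : ∀ i t, u i t = x i t - m t - txbar i := by
    intro i t; simp only [hudef, htx i t, hm]
  have hv : ∀ i t, v i t = y i t - my t - tybar i := by
    intro i t; simp only [hvdef, hty i t, hmy]
  have hsum_t : ∀ i, ∑ t ∈ range T, u i t = 0 := by
    intro i
    simp only [hudef, Finset.sum_sub_distrib, Finset.sum_const, card_range, nsmul_eq_mul,
      htxbar i]
    field_simp
    ring
  have htx_col : ∀ t, ∑ i ∈ range N, tx i t = 0 := by
    intro t
    simp only [htx, Finset.sum_sub_distrib, Finset.sum_const, card_range, nsmul_eq_mul]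
    field_simp
    ring
  have htxbar_sum : ∑ i ∈ range N, txbar i = 0 := by
    simp only [htxbar, ← Finset.mul_sum]
    rw [Finset.sum_comm]
    simp [htx_col]
  have hsum_i : ∀ t, ∑ i ∈ range N, u i t = 0 := by
    intro t
    simp only [hudef, Finset.sum_sub_distrib, htx_col, htxbar_sum, sub_zero]
  set r : ℕ → ℕ → ℝ := fun i t => y i t - α i - β * x i t - γ t with hrdef
  set Sru : ℝ := ∑ i ∈ range N, ∑ t ∈ range T, r i t * u i t with hSru
  set Suu : ℝ := ∑ i ∈ range N, ∑ t ∈ range T, u i t ^ 2 with hSuu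
  set Svu : ℝ := ∑ i ∈ range N, ∑ t ∈ range T, v i t * u i t with hSvu
  have hfoc : Sru = 0 := by
    have key : ∀ s : ℝ, 0 ≤ (-2 * Sru) * s + Suu * s ^ 2 := by
      intro s
      have hper := hmin (fun i => α i - s * txbar i - s * m (T - 1)) (β + s)
        (fun t => γ t - s * m t + s * m (T - 1)) (by simp [hγ])
      have hL : ∀ i t, y i t - (α i - s * txbar i - s * m (T - 1)) - (β + s) * x i t -
          (γ t - s * m t + s * m (T - 1)) = r i t - s * u i t := by
        intro i t
        rw [hu i t]
        show _ = (y i t - α i - β * x i t - γ t) - s * _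
        ring
      simp only [hL] at hper
      have hLHS : ∑ i ∈ range N, ∑ t ∈ range T, (y i t - α i - β * x i t - γ t) ^ 2
          = ∑ i ∈ range N, ∑ t ∈ range T, r i t ^ 2 := rfl
      rw [hLHS] at hper
      have hexp : ∑ i ∈ range N, ∑ t ∈ range T, (r i t - s * u i t) ^ 2 =
          (∑ i ∈ range N, ∑ t ∈ range T, r i t ^ 2) + ((-2 * Sru) * s + Suu * s ^ 2) := by
        calc ∑ i ∈ range N, ∑ t ∈ range T, (r i t - s * u i t) ^ 2
            = ∑ i ∈ range N, (∑ t ∈ range T, r i t ^ 2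
                - 2 * s * ∑ t ∈ range T, r i t * u i t
                + s ^ 2 * ∑ t ∈ range T, u i t ^ 2) :=
              Finset.sum_congr rfl fun i _ => expand_sq _ _ _ _
          _ = ∑ i ∈ range N, ∑ t ∈ range T, r i t ^ 2
                - 2 * s * ∑ i ∈ range N, ∑ t ∈ range T, r i t * u i t
                + s ^ 2 * ∑ i ∈ range N, ∑ t ∈ range T, u i t ^ 2 := by
              rw [Finset.sum_add_distrib, Finset.sum_sub_distrib, ← Finset.mul_sum,
                ← Finset.mul_sum]
          _ = (∑ i ∈ range N, ∑ t ∈ range T, r i t ^ 2) + ((-2 * Sru) * s + Suu * s ^ 2) := by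
              rw [← hSru, ← hSuu]; ring
      rw [hexp] at hper
      linarith
    have := foc_zero_s10 (-2 * Sru) Suu key
    linarith
  have hdecomp : Sru = Svu - β * Suu := by
    have hpt : ∀ i t, r i t * u i t =
        (v i t * u i t - β * u i t ^ 2) + (my t - β * m t - γ t) * u i t
          + (tybar i - β * txbar i - α i) * u i t := by
      intro i t
      have h1 := hu i t
      have h2 := hv i t
      show (y i t - α i - β * x i t - γ t) * u i t = _
      have hx : x i t = u i t + m t + txbar i := by linarith
      have hy : y i t = v i t + my t + tybar i := by linarith
      rw [hx, hy]
      ring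
    have e1 : ∑ i ∈ range N, ∑ t ∈ range T, (my t - β * m t - γ t) * u i t = 0 := by
      rw [Finset.sum_comm]
      apply Finset.sum_eq_zero
      intro t _
      rw [← Finset.mul_sum, hsum_i t, mul_zero]
    have e2 : ∑ i ∈ range N, ∑ t ∈ range T, (tybar i - β * txbar i - α i) * u i t = 0 := by
      apply Finset.sum_eq_zero
      intro i _
      rw [← Finset.mul_sum, hsum_t i, mul_zero]
    have e3 : ∑ i ∈ range N, ∑ t ∈ range T, (v i t * u i t - β * u i t ^ 2)
        = Svu - β * Suu := by
      simp only [Finset.sum_sub_distrib, ← Finset.mul_sum]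
      rfl
    calc Sru = ∑ i ∈ range N, ∑ t ∈ range T, ((v i t * u i t - β * u i t ^ 2)
          + (my t - β * m t - γ t) * u i t + (tybar i - β * txbar i - α i) * u i t) := by
          rw [hSru]; exact Finset.sum_congr rfl fun i _ => Finset.sum_congr rfl fun t _ => hpt i t
      _ = Svu - β * Suu := by
          simp only [Finset.sum_add_distrib]
          rw [e1, e2, e3]
          ring
  have hSuu_pos : 0 < Suu := hpos
  have hβ : Svu - β * Suu = 0 := by rw [← hdecomp, hfoc]
  have hfin : β = Svu / Suu := by
    field_simp
    linarith
  rw [hfin, hSvu, hSuu]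
end

section
/- If ∑_{i=1}^N ∑_{t=1}^T (x̃_{it} − x̄̃_i)(z̃_{it} − z̄̃_i) ≠ 0, then ∑_{i=1}^N ∑_{1≤t<s≤T} (x̃_{is} − x̃_{it})(z̃_{is} − z̃_{it}) ≠ 0 and the TWFE instrumental-variables estimator satisfies [∑_{i=1}^N ∑_{t=1}^T (ỹ_{it} − ȳ̃_i)(z̃_{it} − z̄̃_i)] / [∑_{i=1}^N ∑_{t=1}^T (x̃_{it} − x̄̃_i)(z̃_{it} − z̄̃_i)] = [∑_{i=1}^N ∑_{1≤t<s≤T} (ỹ_{is} − ỹ_{it})(z̃_{is} − z̃_{it})] / [∑_{i=1}^N ∑_{1≤t<s≤T} (x̃_{is} − x̃_{it})(z̃_{is} − z̃_{it})]. -/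
open Finset

lemma tri_sum (a b : ℕ → ℝ) : ∀ T : ℕ,
    ∑ s ∈ range T, ∑ t ∈ range s, (a s - a t) * (b s - b t)
      = T * (∑ t ∈ range T, a t * b t) - (∑ t ∈ range T, a t) * (∑ t ∈ range T, b t) := by
  intro T
  induction T with
  | zero => simp
  | succ T ih =>
    rw [sum_range_succ, ih, sum_range_succ, sum_range_succ, sum_range_succ]
    have h : ∑ t ∈ range T, (a T - a t) * (b T - b t)
        = T * (a T * b T) - a T * (∑ t ∈ range T, b t)
          - (∑ t ∈ range T, a t) * b T + ∑ t ∈ range T, a t * b t := by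
      rw [Finset.sum_congr rfl (fun t _ => by ring :
          ∀ t ∈ range T, (a T - a t) * (b T - b t)
            = a T * b T - a T * b t - a t * b T + a t * b t)]
      simp [Finset.sum_add_distrib, Finset.sum_sub_distrib, ← Finset.mul_sum,
        ← Finset.sum_mul, Finset.card_range]
    rw [h]
    push_cast
    ring

lemma pair_eq_T_within (T : ℕ) (hT : 0 < T) (a b : ℕ → ℝ) :
    ∑ s ∈ range T, ∑ t ∈ range s, (a s - a t) * (b s - b t)
      = T * ∑ t ∈ range T, (a t - (1 / (T : ℝ)) * ∑ u ∈ range T, a u)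
          * (b t - (1 / (T : ℝ)) * ∑ u ∈ range T, b u) := by
  have hT' : (T : ℝ) ≠ 0 := Nat.cast_ne_zero.mpr hT.ne'
  rw [tri_sum]
  set A := ∑ u ∈ range T, a u
  set B := ∑ u ∈ range T, b u
  have h : ∑ t ∈ range T, (a t - (1 / (T : ℝ)) * A) * (b t - (1 / (T : ℝ)) * B)
      = ∑ t ∈ range T, a t * b t - (1 / (T : ℝ)) * A * B
        - (1 / (T : ℝ)) * B * A + T * ((1 / (T : ℝ)) * A * ((1 / (T : ℝ)) * B)) := by
    rw [Finset.sum_congr rfl (fun t _ => by ring :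
        ∀ t ∈ range T, (a t - (1 / (T : ℝ)) * A) * (b t - (1 / (T : ℝ)) * B)
          = a t * b t - (1 / (T : ℝ)) * B * a t - (1 / (T : ℝ)) * A * b t
            + (1 / (T : ℝ)) * A * ((1 / (T : ℝ)) * B))]
    simp [Finset.sum_add_distrib, Finset.sum_sub_distrib, ← Finset.mul_sum,
      Finset.card_range]
    ring
  rw [h]
  field_simp
  ring

/-- TWFE instrumental-variables estimator: if the within-form denominator
`∑_i ∑_t (x̃_it − x̄̃_i)(z̃_it − z̄̃_i)` is nonzero, then the pairwise-difference denominator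
is nonzero and the two ratio representations of the TWFE IV estimator coincide.
Periods are indexed `0, …, T−1`. -/
theorem twfe_iv_pairwise (N T : ℕ) (hN : 1 ≤ N) (hT : 2 ≤ T)
    (y x z ty tx tz : ℕ → ℕ → ℝ) (tybar txbar tzbar : ℕ → ℝ)
    (hty : ∀ i t, ty i t = y i t - (1 / (N : ℝ)) * ∑ j ∈ range N, y j t)
    (htx : ∀ i t, tx i t = x i t - (1 / (N : ℝ)) * ∑ j ∈ range N, x j t)
    (htz : ∀ i t, tz i t = z i t - (1 / (N : ℝ)) * ∑ j ∈ range N, z j t)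
    (htybar : ∀ i, tybar i = (1 / (T : ℝ)) * ∑ t ∈ range T, ty i t)
    (htxbar : ∀ i, txbar i = (1 / (T : ℝ)) * ∑ t ∈ range T, tx i t)
    (htzbar : ∀ i, tzbar i = (1 / (T : ℝ)) * ∑ t ∈ range T, tz i t)
    (hden : ∑ i ∈ range N, ∑ t ∈ range T, (tx i t - txbar i) * (tz i t - tzbar i) ≠ 0) :
    (∑ i ∈ range N, ∑ s ∈ range T, ∑ t ∈ range s, (tx i s - tx i t) * (tz i s - tz i t) ≠ 0) ∧
    (∑ i ∈ range N, ∑ t ∈ range T, (ty i t - tybar i) * (tz i t - tzbar i)) /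
      (∑ i ∈ range N, ∑ t ∈ range T, (tx i t - txbar i) * (tz i t - tzbar i)) =
    (∑ i ∈ range N, ∑ s ∈ range T, ∑ t ∈ range s, (ty i s - ty i t) * (tz i s - tz i t)) /
      (∑ i ∈ range N, ∑ s ∈ range T, ∑ t ∈ range s, (tx i s - tx i t) * (tz i s - tz i t)) := by
  have hT0 : 0 < T := by omega
  have hT' : (T : ℝ) ≠ 0 := Nat.cast_ne_zero.mpr hT0.ne'
  have hx : ∑ i ∈ range N, ∑ s ∈ range T, ∑ t ∈ range s, (tx i s - tx i t) * (tz i s - tz i t)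
      = T * ∑ i ∈ range N, ∑ t ∈ range T, (tx i t - txbar i) * (tz i t - tzbar i) := by
    rw [Finset.mul_sum]
    refine Finset.sum_congr rfl fun i _ => ?_
    rw [pair_eq_T_within T hT0 (tx i) (tz i), htxbar i, htzbar i]
  have hy : ∑ i ∈ range N, ∑ s ∈ range T, ∑ t ∈ range s, (ty i s - ty i t) * (tz i s - tz i t)
      = T * ∑ i ∈ range N, ∑ t ∈ range T, (ty i t - tybar i) * (tz i t - tzbar i) := by
    rw [Finset.mul_sum]
    refine Finset.sum_congr rfl fun i _ => ?_
    rw [pair_eq_T_within T hT0 (ty i) (tz i), htybar i, htzbar i]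
  refine ⟨by rw [hx]; exact mul_ne_zero hT' hden, ?_⟩
  rw [hx, hy, mul_div_mul_left _ _ hT']
end
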